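/- arXiv:2308.04646 — 4 statements merged into one kernel-verified Lean document; each statement's English description precedes it below -/
import Mathlib

section
/- Let n > 5f and consider a multiset W of n − f values (received messages, at most f of which are from faulty processes). If, after removing the f smallest and f largest elements of W, all remaining n − 3f elements equal v, then: (a) at least n − 4f correct senders have input v; (b) at least n − 3f correct senders have input at most v; and (c) at least n − 3f correct senders have input at least v. In particular, since n > 5f, at least one correct sender has input v. -/
/-!
The middle part `M` of the trimmed multiset has `n - 3f` elements, all equal to `v`. Since every
element of the low part `L` lies below some element of `M`, all of `L + M` (that is, `n - 2f`
received values) are at most `v`; symmetrically `M + H` are at least `v`, and `M` alone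
contributes `n - 3f` copies of `v`. Discarding the at most `f` faulty values loses at most `f`
from each of these counts, and `n - 4f > 0` because `n > 5f`.
-/

namespace Multiset

variable {α : Type*}

theorem card_filter_le_card_filter_tsub_add_card [DecidableEq α] (p : α → Prop)
    [DecidablePred p] (W F : Multiset α) :
    (W.filter p).card ≤ ((W - F).filter p).card + F.card :=
  calc (W.filter p).card ≤ ((W - F + F).filter p).card :=
        card_le_card (filter_le_filter p le_tsub_add)
    _ = ((W - F).filter p).card + (F.filter p).card := by rw [filter_add, card_add]
    _ ≤ ((W - F).filter p).card + F.card := Nat.add_le_add_left (card_le_card (filter_le p F)) _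

theorem count_le_count_tsub_add_card [DecidableEq α] (a : α) (W F : Multiset α) :
    W.count a ≤ (W - F).count a + F.card := by
  simpa only [count_eq_card_filter_eq] using
    card_filter_le_card_filter_tsub_add_card (a = ·) W F

section Trim

variable [LinearOrder α] {L M H : Multiset α} {v : α}

theorem card_le_count_of_forall_eq (hM : ∀ x ∈ M, x = v) : M.card ≤ (L + M + H).count v := by
  rw [count_add, count_add, count_eq_card.mpr fun x hx => (hM x hx).symm]
  omega

theorem card_add_card_le_card_filter_le_of_trim (hLsmall : ∀ x ∈ L, ∀ y ∈ M + H, x ≤ y)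
    (hM : ∀ x ∈ M, x = v) (hMne : M ≠ 0) :
    L.card + M.card ≤ ((L + M + H).filter (· ≤ v)).card := by
  obtain ⟨y, hy⟩ := exists_mem_of_ne_zero hMne
  have hLM : ∀ x ∈ L + M, x ≤ v := by
    rintro x hx
    rcases mem_add.mp hx with hxL | hxM
    · exact hM y hy ▸ hLsmall x hxL y (mem_add.mpr (Or.inl hy))
    · exact (hM x hxM).le
  calc L.card + M.card = ((L + M).filter (· ≤ v)).card := by
        rw [filter_eq_self.mpr hLM, card_add]
    _ ≤ ((L + M + H).filter (· ≤ v)).card :=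
        card_le_card (filter_le_filter _ (le_add_right _ _))

theorem card_add_card_le_card_filter_ge_of_trim (hHlarge : ∀ x ∈ H, ∀ y ∈ L + M, y ≤ x)
    (hM : ∀ x ∈ M, x = v) (hMne : M ≠ 0) :
    M.card + H.card ≤ ((L + M + H).filter (v ≤ ·)).card := by
  obtain ⟨y, hy⟩ := exists_mem_of_ne_zero hMne
  have hMH : ∀ x ∈ M + H, v ≤ x := by
    rintro x hx
    rcases mem_add.mp hx with hxM | hxH
    · exact (hM x hxM).ge
    · exact hM y hy ▸ hHlarge x hxH y (mem_add.mpr (Or.inr hy))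
  calc M.card + H.card = ((M + H).filter (v ≤ ·)).card := by
        rw [filter_eq_self.mpr hMH, card_add]
    _ ≤ ((L + M + H).filter (v ≤ ·)).card := by
      rw [add_assoc]
      exact card_le_card (filter_le_filter _ (le_add_left _ _))

end Trim

end Multiset

open Multiset in
theorem trimmed_values_lemma_general (n f : ℕ) (hn : 5 * f < n)
    (V : Type) [LinearOrder V]
    (W F : Multiset V) (hW : W.card = n - f)
    (hF : F.card ≤ f)
    (v : V) (L M H : Multiset V)
    (hsplit : W = L + M + H) (hL : L.card = f) (hH : H.card = f)
    (hLsmall : ∀ x ∈ L, ∀ y ∈ M + H, x ≤ y)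
    (hHlarge : ∀ x ∈ H, ∀ y ∈ L + M, y ≤ x)
    (hM : ∀ x ∈ M, x = v) :
    n - 4 * f ≤ (W - F).count v ∧
    n - 3 * f ≤ ((W - F).filter (fun x => x ≤ v)).card ∧
    n - 3 * f ≤ ((W - F).filter (fun x => v ≤ x)).card ∧
    v ∈ W - F := by
  have hMcard : M.card = n - 3 * f := by
    have := congrArg card hsplit
    simp only [card_add, hW, hL, hH] at this
    omega
  have hMne : M ≠ 0 := card_pos.mp (by omega)
  have hcount := count_le_count_tsub_add_card v W F
  have hle := card_filter_le_card_filter_tsub_add_card (· ≤ v) W F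
  have hge := card_filter_le_card_filter_tsub_add_card (v ≤ ·) W F
  have hM_count := card_le_count_of_forall_eq (L := L) (H := H) hM
  have hLM := card_add_card_le_card_filter_le_of_trim (H := H) hLsmall hM hMne
  have hMH := card_add_card_le_card_filter_ge_of_trim hHlarge hM hMne
  subst hsplit
  refine ⟨by omega, by omega, by omega, count_pos.mp (by omega)⟩

/-- Trimming lemma for the `n > 5f` malicious-failure algorithm.
`W` is the multiset of the `n - f` received values; `F ≤ W` are the (at most
`f`) values from faulty senders, so `W - F` are the values from correct
senders (equal to their inputs).  If removing the `f` smallest elements `L`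
and the `f` largest elements `H` of `W` leaves a middle part `M` all of whose
elements equal `v`, then: (a) at least `n - 4f` correct senders have input
`v`; (b) at least `n - 3f` correct senders have input at most `v`; (c) at
least `n - 3f` correct senders have input at least `v`; and in particular
some correct sender has input `v`. -/
theorem trimmed_values_lemma (n f : ℕ) (hn : 5 * f < n)
    (V : Type) [LinearOrder V]
    (W F : Multiset V) (hW : W.card = n - f)
    (hFW : F ≤ W) (hF : F.card ≤ f)
    (v : V) (L M H : Multiset V)
    (hsplit : W = L + M + H) (hL : L.card = f) (hH : H.card = f)
    (hLsmall : ∀ x ∈ L, ∀ y ∈ M + H, x ≤ y)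
    (hHlarge : ∀ x ∈ H, ∀ y ∈ L + M, y ≤ x)
    (hM : ∀ x ∈ M, x = v) :
    n - 4 * f ≤ (W - F).count v ∧
    n - 3 * f ≤ ((W - F).filter (fun x => x ≤ v)).card ∧
    n - 3 * f ≤ ((W - F).filter (fun x => v ≤ x)).card ∧
    v ∈ W - F :=
  trimmed_values_lemma_general n f hn V W F hW hF v L M H hsplit hL hH hLsmall hHlarge hM
end

section
/- Suppose a correct process receives a multiset of messages in which, for some mode value m with count x, the messages for values other than m number at least x + f + 1, and at most f messages are from faulty processes. Then the messages from correct processes for values other than m number at least x + 1, and hence cannot all be for a single value (since no value occurs more than x times). Consequently, at least two distinct values appear among the correct senders' inputs. -/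
/-!
Removing the at most `f` faulty messages leaves at least `x + 1` correct messages for values
other than `m`. Since no value occurs more than `x` times, these cannot all carry the same
value, so the correct senders' inputs take at least two distinct values.
-/

namespace Multiset

variable {α : Type*}

theorem card_filter_le_card_filter_sub_add_card (p : α → Prop) [DecidablePred p]
    [DecidableEq α] (M F : Multiset α) :
    (M.filter p).card ≤ ((M - F).filter p).card + F.card :=
  calc (M.filter p).card ≤ ((M - F + F).filter p).card :=
        card_le_card (filter_le_filter p Multiset.le_sub_add)
    _ = ((M - F).filter p).card + (F.filter p).card := by rw [filter_add, card_add]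
    _ ≤ ((M - F).filter p).card + F.card := by gcongr; exact filter_le p F

theorem not_exists_forall_eq_of_count_lt_card [DecidableEq α] {s : Multiset α}
    (h : ∀ w, s.count w < s.card) : ¬ ∃ w, ∀ y ∈ s, y = w := by
  rintro ⟨w, hw⟩
  exact (h w).ne (count_eq_card.mpr fun y hy => (hw y hy).symm)

theorem exists_mem_ne_of_not_exists_forall_eq {s : Multiset α}
    (h : ¬ ∃ w, ∀ y ∈ s, y = w) (a : α) : ∃ b ∈ s, a ≠ b := by
  push Not at h
  obtain ⟨b, hb, hba⟩ := h a
  exact ⟨b, hb, Ne.symm hba⟩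

end Multiset

open Multiset in
theorem bot_echo_validity_general (f : ℕ)
    (V : Type) [DecidableEq V] (M F : Multiset V) (m : V)
    (hFcard : F.card ≤ f)
    (hmany : M.count m + f + 1 ≤ (M.filter (fun y => y ≠ m)).card)
    (hmode : ∀ w : V, M.count w ≤ M.count m) :
    M.count m + 1 ≤ ((M - F).filter (fun y => y ≠ m)).card ∧
    (¬ ∃ w : V, ∀ y ∈ (M - F).filter (fun y => y ≠ m), y = w) ∧
    (∃ a ∈ M - F, ∃ b ∈ M - F, a ≠ b) := by
  have hremove := card_filter_le_card_filter_sub_add_card (fun y => y ≠ m) M F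
  set S := (M - F).filter (fun y => y ≠ m)
  have hcard : M.count m + 1 ≤ S.card := by omega
  have hSM : S ≤ M := (filter_le _ _).trans (Multiset.sub_le_self _ _)
  have hsplit : ¬ ∃ w, ∀ y ∈ S, y = w :=
    not_exists_forall_eq_of_count_lt_card fun w =>
      ((count_le_of_le w hSM).trans (hmode w)).trans_lt hcard
  obtain ⟨a, ha⟩ := card_pos_iff_exists_mem.mp (Nat.lt_of_succ_le (le_of_add_le_right hcard))
  obtain ⟨b, hb, hab⟩ := exists_mem_ne_of_not_exists_forall_eq hsplit a
  exact ⟨hcard, hsplit, a, mem_of_mem_filter ha, b, mem_of_mem_filter hb, hab⟩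

/-- Validity of ⊥-echoes: `M` is the multiset of received message values,
`F ≤ M` are those (at most `f`) from faulty senders, `m` is a mode of `M`
occurring `x = M.count m` times.  If the messages for values other than `m`
number at least `x + f + 1`, then the messages from correct senders for
values other than `m` number at least `x + 1`, they cannot all be for a
single value, and hence at least two distinct values appear among the
correct senders' inputs. -/
theorem bot_echo_validity (f : ℕ)
    (V : Type) [DecidableEq V] (M F : Multiset V) (m : V)
    (hFM : F ≤ M) (hFcard : F.card ≤ f)
    (hmany : M.count m + f + 1 ≤ (M.filter (fun y => y ≠ m)).card)
    (hmode : ∀ w : V, M.count w ≤ M.count m) :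
    M.count m + 1 ≤ ((M - F).filter (fun y => y ≠ m)).card ∧
    (¬ ∃ w : V, ∀ y ∈ (M - F).filter (fun y => y ≠ m), y = w) ∧
    (∃ a ∈ M - F, ∃ b ∈ M - F, a ≠ b) :=
  bot_echo_validity_general f V M F m hFcard hmany hmode
end

section
/- Let n > 3f. Suppose one correct process receives at least n − f ECHO5 messages for value v ∈ V, and another correct process receives at least n − f ECHO5 messages for ⊥, where each of the n − f correct processes sends at most one ECHO5 message and there are f faulty processes. Then n ≥ 2(n − 2f) + f, contradicting n > 3f. Hence if a correct process decides (v,2), no correct process decides (⊥,0). -/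
open Finset

theorem Finset.disjoint_of_forall_eq_of_ne {α β : Type*} {g : α → β} {a b : β} (hab : a ≠ b)
    {S T : Finset α} (hS : ∀ i ∈ S, g i = a) (hT : ∀ i ∈ T, g i = b) : Disjoint S T :=
  disjoint_left.2 fun i hiS hiT => hab ((hS i hiS).symm.trans (hT i hiT))

theorem Finset.card_add_card_le_of_disjoint_of_subset {α : Type*} {S T U : Finset α}
    (hS : S ⊆ U) (hT : T ⊆ U) (hST : Disjoint S T) : #S + #T ≤ #U := by
  classical
  rw [← card_union_of_disjoint hST]
  exact card_le_card (union_subset hS hT)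

/-- Agreement for `R = 2` of the `n > 3f` algorithm: each correct process
sends at most one ECHO5 message (`msg i = some w` where `w : Option V`, with
inner `none` standing for `⊥`).  It is impossible for one correct process to
receive at least `n − f` ECHO5 messages for `v ∈ V` (at least `n − 2f` from
correct senders) while another receives at least `n − f` ECHO5 messages for
`⊥` (at least `n − 2f` from correct senders); hence if a correct process
decides `(v,2)`, no correct process decides `(⊥,0)`. -/
theorem echo5_no_v2_and_bot (n f : ℕ) (hn : 3 * f < n)
    (V : Type) (correct : Finset (Fin n)) (hcorrect : correct.card = n - f)
    (msg : Fin n → Option (Option V)) (v : V)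
    (S T : Finset (Fin n)) (hS : S ⊆ correct) (hT : T ⊆ correct)
    (hScard : n - 2 * f ≤ S.card) (hTcard : n - 2 * f ≤ T.card)
    (hSv : ∀ i ∈ S, msg i = some (some v))
    (hTbot : ∀ i ∈ T, msg i = some none) :
    False := by
  have hdisj : Disjoint S T := disjoint_of_forall_eq_of_ne (by simp) hSv hTbot
  have hquorums := card_add_card_le_of_disjoint_of_subset hS hT hdisj
  -- `2 (n - 2f) ≤ n - f` forces `n ≤ 3f`
  omega
end

section
/- Let n ≤ 5f and suppose D : {0,…,n−f} → {0,1,⊥} is a function satisfying: D(z) = 0 for all z ≥ n − 2f; D(z) = 1 for all z ≤ f; and whenever D(x) = 0 and D(y) = 1, |x − y| > f. Let m = ⌈(n−f)/2⌉ and assume n ≥ 3f + 2. Then D(m) = ⊥, and moreover m + f ≥ n − 2f (so D(m + f) = 0) and m − f ≤ f (so D(m − f) = 1). -/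
/-!
Write `m = ⌈(n − f)/2⌉`. Since `n ≤ 5f`, the point `m` lies within `f` of the 1-forced count `f`
and of the 0-forced count `n − 2f`. By the separation property `D m` can be neither 0 nor 1,
while `m + f` and `m − f` land in the forced regions.
-/

def SeparatedDecisions (D : ℕ → Option Bool) (N f : ℕ) : Prop :=
  ∀ x y, x ≤ N → y ≤ N → D x = some false → D y = some true → (f : ℤ) < |(x : ℤ) - (y : ℤ)|

theorem SeparatedDecisions.eq_none_of_near {D : ℕ → Option Bool} {N f x₀ x₁ m : ℕ}
    (hsep : SeparatedDecisions D N f) (hm : m ≤ N) (hx₀ : x₀ ≤ N) (hx₁ : x₁ ≤ N)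
    (hD₀ : D x₀ = some false) (hD₁ : D x₁ = some true)
    (hnear₀ : |(x₀ : ℤ) - m| ≤ f) (hnear₁ : |(m : ℤ) - x₁| ≤ f) : D m = none := by
  match hDm : D m with
  | none => rfl
  | some false => exact absurd (hsep m x₁ hm hx₁ hDm hD₁) hnear₁.not_gt
  | some true => exact absurd (hsep x₀ m hx₀ hm hD₀ hDm) hnear₀.not_gt

theorem Nat.ceilDiv_two (N : ℕ) : N ⌈/⌉ 2 = (N + 1) / 2 := Nat.ceilDiv_eq_add_pred_div N 2

/-- No built-in binding for `n ≤ 5f`: let `D z` model the decision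
(`some false` = 0, `some true` = 1, `none` = ⊥) of a uniform algorithm when
`z` of the `n − f` received binary values are 0.  If `D` forces decision 0
for `z ≥ n − 2f`, forces decision 1 for `z ≤ f`, and any 0-deciding and
1-deciding counts differ by more than `f`, then at the balanced point
`m = ⌈(n − f)/2⌉` the decision is ⊥, while `m + f ≥ n − 2f` (so
`D (m + f) = 0`) and `m − f ≤ f` (so `D (m − f) = 1`). -/
theorem no_builtin_binding (n f : ℕ) (hlow : 3 * f + 2 ≤ n) (hhigh : n ≤ 5 * f)
    (D : ℕ → Option Bool)
    (h0 : ∀ z, n - 2 * f ≤ z → z ≤ n - f → D z = some false)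
    (h1 : ∀ z, z ≤ f → D z = some true)
    (hdiff : ∀ x y, x ≤ n - f → y ≤ n - f →
      D x = some false → D y = some true → (f : ℤ) < |(x : ℤ) - (y : ℤ)|) :
    D ((n - f) ⌈/⌉ 2) = none ∧
    n - 2 * f ≤ (n - f) ⌈/⌉ 2 + f ∧
    (n - f) ⌈/⌉ 2 - f ≤ f ∧
    D ((n - f) ⌈/⌉ 2 + f) = some false ∧
    D ((n - f) ⌈/⌉ 2 - f) = some true := by
  rw [Nat.ceilDiv_two]
  set m := (n - f + 1) / 2
  have hDm : D m = none :=
    SeparatedDecisions.eq_none_of_near hdiff (x₀ := n - 2 * f) (x₁ := f) (by omega) (by omega)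
      (by omega) (h0 _ le_rfl (by omega)) (h1 f le_rfl)
      (abs_sub_le_iff.2 ⟨by omega, by omega⟩) (abs_sub_le_iff.2 ⟨by omega, by omega⟩)
  exact ⟨hDm, by omega, by omega, h0 _ (by omega) (by omega), h1 _ (by omega)⟩
end
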